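/- arXiv:1912.08554 — 2 statements merged into one kernel-verified Lean document; each statement's English description precedes it below -/
import Mathlib

section
/- Let $\gamma > 0$, $\rho > 0$, $\theta > 0$ and suppose a matrix $\Gamma \in \mathbb{R}^{n\times n}$ is $\gamma$-negative definite, and that $x \in \mathbb{R}^n$, $n, m \in \mathbb{R}^n$ satisfy $|m|\,|x - m| - |m|^2 \le -\rho$ and $|m|\,|x-m| \le \theta$ (where $m$ plays the role of $\nabla h(x)^{-\star}n$ and $x$ of $h(x)$). If $\|\Gamma\| \le \gamma + c$ for some $c \ge 0$, then $\langle \Gamma x, m \rangle \le -\rho\gamma + \theta c$. -/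
open RealInnerProductSpace

section

variable {E : Type*} [NormedAddCommGroup E] [InnerProductSpace ℝ E]

theorem ContinuousLinearMap.inner_map_le_of_opNorm_le (Γ : E →L[ℝ] E) {K : ℝ} (hK : ‖Γ‖ ≤ K)
    (y z : E) : ⟪Γ y, z⟫ ≤ K * (‖y‖ * ‖z‖) :=
  calc ⟪Γ y, z⟫ ≤ ‖Γ y‖ * ‖z‖ := real_inner_le_norm _ _
    _ ≤ ‖Γ‖ * ‖y‖ * ‖z‖ := by gcongr; exact Γ.le_opNorm y
    _ ≤ K * (‖y‖ * ‖z‖) := by rw [mul_assoc]; gcongr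

/-- Splitting `x = m + (x - m)`: the coercive part acts on `m`, the operator norm bounds the rest. -/
theorem ContinuousLinearMap.inner_map_le_of_inner_self_le (Γ : E →L[ℝ] E) {γ c : ℝ} (x m : E)
    (hm : ⟪Γ m, m⟫ ≤ -γ * ‖m‖ ^ 2) (hΓnorm : ‖Γ‖ ≤ γ + c) :
    ⟪Γ x, m⟫ ≤ γ * (‖m‖ * ‖x - m‖ - ‖m‖ ^ 2) + c * (‖m‖ * ‖x - m‖) := by
  have hsplit : ⟪Γ x, m⟫ = ⟪Γ m, m⟫ + ⟪Γ (x - m), m⟫ := by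
    rw [← inner_add_left, ← map_add, add_sub_cancel]
  have hrest := Γ.inner_map_le_of_opNorm_le hΓnorm (x - m) m
  linarith

end

theorem inner_Gamma_le_general
    (n : ℕ) (Γ : EuclideanSpace ℝ (Fin n) →L[ℝ] EuclideanSpace ℝ (Fin n))
    (γ ρ θ c : ℝ) (hγ : 0 < γ) (hc : 0 ≤ c)
    (hΓ : ∀ y : EuclideanSpace ℝ (Fin n), ⟪Γ y, y⟫ ≤ -γ * ‖y‖ ^ 2)
    (hΓnorm : ‖Γ‖ ≤ γ + c)
    (x m : EuclideanSpace ℝ (Fin n))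
    (h1 : ‖m‖ * ‖x - m‖ - ‖m‖ ^ 2 ≤ -ρ)
    (h2 : ‖m‖ * ‖x - m‖ ≤ θ) :
    ⟪Γ x, m⟫ ≤ -ρ * γ + θ * c :=
  calc ⟪Γ x, m⟫ ≤ γ * (‖m‖ * ‖x - m‖ - ‖m‖ ^ 2) + c * (‖m‖ * ‖x - m‖) :=
        Γ.inner_map_le_of_inner_self_le x m (hΓ m) hΓnorm
    _ ≤ γ * -ρ + c * θ := by gcongr
    _ = -ρ * γ + θ * c := by ring

/-- Key estimate in Proposition 4.8: if `Γ` is `γ`-negative definite with `‖Γ‖ ≤ γ + c`,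
and `|m||x - m| - |m|² ≤ -ρ`, `|m||x - m| ≤ θ`, then `⟪Γ x, m⟫ ≤ -ργ + θc`. -/
theorem inner_Gamma_le
    (n : ℕ) (Γ : EuclideanSpace ℝ (Fin n) →L[ℝ] EuclideanSpace ℝ (Fin n))
    (γ ρ θ c : ℝ) (hγ : 0 < γ) (hρ : 0 < ρ) (hθ : 0 < θ) (hc : 0 ≤ c)
    (hΓ : ∀ y : EuclideanSpace ℝ (Fin n), ⟪Γ y, y⟫ ≤ -γ * ‖y‖ ^ 2)
    (hΓnorm : ‖Γ‖ ≤ γ + c)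
    (x m : EuclideanSpace ℝ (Fin n))
    (h1 : ‖m‖ * ‖x - m‖ - ‖m‖ ^ 2 ≤ -ρ)
    (h2 : ‖m‖ * ‖x - m‖ ≤ θ) :
    ⟪Γ x, m⟫ ≤ -ρ * γ + θ * c :=
  inner_Gamma_le_general n Γ γ ρ θ c hγ hc hΓ hΓnorm x m h1 h2
end

section
/- For any nonempty closed set $E \subset \mathbb{R}^k$ and $x \in \overline{E}$, we have $N_E(x)^- \subset T_E(x)$, where $N_E(x) = \mathrm{Limsup}_{y\to x, y\in E} T_E(y)^-$; that is, every vector $v$ with $\langle v, n\rangle \le 0$ for all $n \in N_E(x)$ belongs to the contingent cone $T_E(x)$. -/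
open RealInnerProductSpace
open RealInnerProductSpace

/-- The contingent (Bouligand) cone to `E` at `x`:
`T_E(x) = {v : liminf_{h → 0⁺} d_E(x + h v)/h = 0}`. -/
def contingentCone {k : ℕ} (E : Set (EuclideanSpace ℝ (Fin k)))
    (x : EuclideanSpace ℝ (Fin k)) : Set (EuclideanSpace ℝ (Fin k)) :=
  {v | Filter.liminf (fun h : ℝ => Metric.infDist (x + h • v) E / h)
    (nhdsWithin 0 (Set.Ioi 0)) = 0}

/-- The negative polar cone `C⁻ = {v : ⟪v, c⟫ ≤ 0 for all c ∈ C}`. -/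
def negPolar {k : ℕ} (C : Set (EuclideanSpace ℝ (Fin k))) :
    Set (EuclideanSpace ℝ (Fin k)) :=
  {v | ∀ c ∈ C, ⟪v, c⟫ ≤ 0}

/-- The limiting normal cone `N_E(x) = Limsup_{y → x, y ∈ E} T_E(y)⁻`
(Kuratowski–Painlevé upper limit: `v ∈ N_E(x)` iff `liminf_{y→x, y∈E} d_{T_E(y)⁻}(v) = 0`). -/
def limitingNormalCone {k : ℕ} (E : Set (EuclideanSpace ℝ (Fin k)))
    (x : EuclideanSpace ℝ (Fin k)) : Set (EuclideanSpace ℝ (Fin k)) :=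
  {v | ∀ ε > (0 : ℝ), ∀ δ > (0 : ℝ), ∃ y ∈ E, ‖y - x‖ < δ ∧
    ∃ w ∈ negPolar (contingentCone E y), ‖w - v‖ < ε}


open Filter Metric Set Topology

/-- A "proximal normal" at `y ∈ E` belongs to the negative polar of the contingent cone. -/
lemma prox_mem_negPolar {k : ℕ} (E : Set (EuclideanSpace ℝ (Fin k))) (hEne : E.Nonempty)
    (y : EuclideanSpace ℝ (Fin k)) (hy : y ∈ E) (n : EuclideanSpace ℝ (Fin k))
    (hprox : ∀ z ∈ E, ⟪n, z - y⟫ ≤ ‖z - y‖ ^ 2 / 2)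
    (w : EuclideanSpace ℝ (Fin k))
    (hw : Filter.liminf (fun h : ℝ => Metric.infDist (y + h • w) E / h)
      (nhdsWithin 0 (Set.Ioi 0)) = 0) :
    ⟪n, w⟫ ≤ 0 := by
  set C : ℝ := (‖w‖ + 1) ^ 2 / 2 + ‖n‖ with hC
  have hCpos : 0 < C := by positivity
  have key : ∀ ε : ℝ, 0 < ε → ε ≤ 1 → ⟪n, w⟫ ≤ ε * C := by
    intro ε hε hε1
    -- frequently d(y+hw)/h < ε
    have hbdd : IsBoundedUnder (· ≤ ·) (𝓝[>] (0:ℝ))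
        (fun h : ℝ => Metric.infDist (y + h • w) E / h) := by
      refine ⟨‖w‖, eventually_map.2 ?_⟩
      filter_upwards [self_mem_nhdsWithin] with h hh
      have h1 : Metric.infDist (y + h • w) E ≤ h * ‖w‖ := by
        calc Metric.infDist (y + h • w) E ≤ dist (y + h • w) y :=
              Metric.infDist_le_dist_of_mem hy
          _ = h * ‖w‖ := by
              rw [dist_eq_norm, add_sub_cancel_left, norm_smul, Real.norm_eq_abs,
                abs_of_pos hh]
      rw [div_le_iff₀ hh]
      calc Metric.infDist (y + h • w) E ≤ h * ‖w‖ := h1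
        _ = ‖w‖ * h := mul_comm _ _
    have hfreq : ∃ᶠ h in 𝓝[>] (0:ℝ), Metric.infDist (y + h • w) E / h < ε := by
      apply frequently_lt_of_liminf_lt (hbdd.isCoboundedUnder_ge)
      rw [hw]; exact hε
    have hev : ∀ᶠ h in 𝓝[>] (0:ℝ), h ∈ Set.Ioo (0:ℝ) ε :=
      Ioo_mem_nhdsGT_of_mem ⟨le_refl _, hε⟩
    obtain ⟨h, hlt, hh0, hhε⟩ := (hfreq.and_eventually hev).exists
    -- z ∈ E close to y + h w
    have hdlt : Metric.infDist (y + h • w) E < ε * h := by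
      have := (div_lt_iff₀ hh0).mp hlt
      linarith [this]
    obtain ⟨z, hzE, hz⟩ := (Metric.infDist_lt_iff hEne).mp hdlt
    have hzy : ‖z - y‖ ≤ h * (‖w‖ + 1) := by
      have h1 : ‖z - y‖ ≤ ‖z - (y + h • w)‖ + ‖h • w‖ := by
        have : z - y = (z - (y + h • w)) + h • w := by abel
        rw [this]; exact norm_add_le _ _
      have h2 : ‖z - (y + h • w)‖ < ε * h := by
        rw [← dist_eq_norm, dist_comm]; exact hz
      have h3 : ‖h • w‖ = h * ‖w‖ := by
        rw [norm_smul, Real.norm_eq_abs, abs_of_pos hh0]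
      nlinarith [norm_nonneg (z - (y + h • w))]
    -- main estimate
    have hsplit : (h : ℝ) * ⟪n, w⟫ = ⟪n, z - y⟫ + ⟪n, (y + h • w) - z⟫ := by
      rw [← real_inner_smul_right, ← inner_add_right]
      congr 1
      abel
    have hcs : ⟪n, (y + h • w) - z⟫ ≤ ‖n‖ * (ε * h) := by
      calc ⟪n, (y + h • w) - z⟫ ≤ ‖n‖ * ‖(y + h • w) - z‖ := real_inner_le_norm _ _
        _ ≤ ‖n‖ * (ε * h) := by
            apply mul_le_mul_of_nonneg_left _ (norm_nonneg n)
            rw [← dist_eq_norm]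
            exact le_of_lt hz
    have hq : ⟪n, z - y⟫ ≤ (h * (‖w‖ + 1)) ^ 2 / 2 := by
      refine le_trans (hprox z hzE) ?_
      nlinarith [norm_nonneg (z - y), hzy]
    have : h * ⟪n, w⟫ ≤ (h * (‖w‖ + 1)) ^ 2 / 2 + ‖n‖ * (ε * h) := by
      rw [hsplit]; linarith
    have hfin : ⟪n, w⟫ ≤ h * (‖w‖ + 1) ^ 2 / 2 + ‖n‖ * ε := by
      rw [← mul_le_mul_iff_right₀ hh0]
      nlinarith
    calc ⟪n, w⟫ ≤ h * (‖w‖ + 1) ^ 2 / 2 + ‖n‖ * ε := hfin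
      _ ≤ ε * (‖w‖ + 1) ^ 2 / 2 + ‖n‖ * ε := by nlinarith [sq_nonneg (‖w‖ + 1)]
      _ = ε * C := by ring
  by_contra hpos
  push_neg at hpos
  obtain ⟨ε, hεpos, hε1, hεle⟩ : ∃ ε : ℝ, 0 < ε ∧ ε ≤ 1 ∧ ε * C ≤ ⟪n, w⟫ / 2 := by
    refine ⟨min 1 (⟪n, w⟫ / (2 * C)), lt_min one_pos (by positivity), min_le_left _ _, ?_⟩
    have h2 : min 1 (⟪n, w⟫ / (2 * C)) * C ≤ (⟪n, w⟫ / (2 * C)) * C :=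
      mul_le_mul_of_nonneg_right (min_le_right _ _) hCpos.le
    have h3 : (⟪n, w⟫ / (2 * C)) * C = ⟪n, w⟫ / 2 := by field_simp
    linarith
  have h4 := le_trans (key ε hεpos hε1) hεle
  linarith

lemma exists_unit_normal {k : ℕ} (E : Set (EuclideanSpace ℝ (Fin k))) (hE : IsClosed E)
    (hEne : E.Nonempty) (x : EuclideanSpace ℝ (Fin k)) (hx : x ∈ E)
    (v : EuclideanSpace ℝ (Fin k)) (c : ℝ) (hc : 0 < c) (hcv : c ≤ ‖v‖)
    (h0 : ℝ) (hh0 : 0 < h0)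
    (hg : ∀ h : ℝ, 0 < h → h ≤ h0 → c / 2 * h ≤ Metric.infDist (x + h • v) E)
    (δ : ℝ) (hδ : 0 < δ) :
    ∃ y ∈ E, ‖y - x‖ < δ ∧ ∃ w : EuclideanSpace ℝ (Fin k), ‖w‖ = 1 ∧
      w ∈ negPolar (contingentCone E y) ∧ c / 4 ≤ ⟪v, w⟫ := by
  have hv : (0:ℝ) < ‖v‖ := lt_of_lt_of_le hc hcv
  set g : ℝ → ℝ := fun s => Metric.infDist (x + s • v) E with hgdef
  have hgcont : Continuous g :=
    (Metric.continuous_infDist_pt E).comp (continuous_const.add (continuous_id.smul continuous_const))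
  have hgle : ∀ s : ℝ, 0 ≤ s → g s ≤ s * ‖v‖ := by
    intro s hs
    calc g s ≤ dist (x + s • v) x := Metric.infDist_le_dist_of_mem hx
      _ = s * ‖v‖ := by
          rw [dist_eq_norm, add_sub_cancel_left, norm_smul, Real.norm_eq_abs, abs_of_nonneg hs]
  set h1 : ℝ := min h0 (δ / (4 * ‖v‖)) with hh1def
  have hh1pos : 0 < h1 := lt_min hh0 (by positivity)
  have hh1h0 : h1 ≤ h0 := min_le_left _ _
  set a : ℝ := min (h1 / 2) (c * h1 / (12 * ‖v‖ + 12)) with hadef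
  have hapos : 0 < a := lt_min (by positivity) (by positivity)
  have hah1 : a < h1 := lt_of_le_of_lt (min_le_left _ _) (by linarith)
  -- a * ‖v‖ ≤ c * h1 / 12
  have havle : a * ‖v‖ ≤ c * h1 / 12 := by
    have h12 : (0:ℝ) < 12 * ‖v‖ + 12 := by positivity
    have h1' : a * ‖v‖ ≤ (c * h1 / (12 * ‖v‖ + 12)) * ‖v‖ :=
      mul_le_mul_of_nonneg_right (min_le_right _ _) (norm_nonneg v)
    have h2' : (c * h1 / (12 * ‖v‖ + 12)) * ‖v‖ ≤ c * h1 / 12 := by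
      rw [div_mul_eq_mul_div, div_le_div_iff₀ h12 (by norm_num : (0:ℝ) < 12)]
      nlinarith [mul_pos hc hh1pos, norm_nonneg v]
    linarith
  -- key point with large right lower Dini derivative
  have key : ∃ t ∈ Set.Ico a h1, ∀ᶠ z in 𝓝[>] t, c / 4 ≤ slope g t z := by
    by_contra hcon
    push_neg at hcon
    have hmvt := image_le_of_liminf_slope_right_lt_deriv_boundary
      (f := g) (f' := fun _ => c / 4) (a := a) (b := h1)
      (B := fun s => g a + c / 3 * (s - a)) (B' := fun _ => c / 3)
      hgcont.continuousOn
      (fun t ht r hr => (hcon t ht).mono fun z hz => hz.trans hr)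
      (by simp)
      (fun s => by
        simpa using (((hasDerivAt_id s).sub_const a).const_mul (c / 3)).const_add (g a))
      (fun t ht _ => by linarith)
    have hfin : g h1 ≤ g a + c / 3 * (h1 - a) :=
      hmvt (right_mem_Icc.2 hah1.le)
    have hga : g a ≤ a * ‖v‖ := hgle a hapos.le
    have hgh1 : c / 2 * h1 ≤ g h1 := hg h1 hh1pos (by exact hh1h0)
    nlinarith [mul_pos hc hh1pos]
  obtain ⟨t, ⟨hta, hth1⟩, hslope⟩ := key
  have htpos : 0 < t := lt_of_lt_of_le hapos hta
  have hth0 : t ≤ h0 := le_trans hth1.le hh1h0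
  have hgt : c / 2 * t ≤ g t := hg t htpos hth0
  have hgtpos : 0 < g t := lt_of_lt_of_le (by positivity) hgt
  -- projection
  obtain ⟨y, hyE, hyd⟩ := hE.exists_infDist_eq_dist hEne (x + t • v)
  set n : EuclideanSpace ℝ (Fin k) := (x + t • v) - y with hndef
  have hnn : ‖n‖ = g t := by
    rw [hndef, ← dist_eq_norm, ← hyd]
  have hnpos : 0 < ‖n‖ := by rw [hnn]; exact hgtpos
  have hn0 : n ≠ 0 := by intro h; rw [h, norm_zero] at hnpos; exact lt_irrefl _ hnpos
  -- proximal inequality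
  have hprox : ∀ z ∈ E, ⟪n, z - y⟫ ≤ ‖z - y‖ ^ 2 / 2 := by
    intro z hz
    have h5 : ‖n‖ ≤ ‖n - (z - y)‖ := by
      have h6 : Metric.infDist (x + t • v) E ≤ dist (x + t • v) z :=
        Metric.infDist_le_dist_of_mem hz
      rw [hyd] at h6
      calc ‖n‖ = dist (x + t • v) y := by rw [hndef, dist_eq_norm]
        _ ≤ dist (x + t • v) z := h6
        _ = ‖n - (z - y)‖ := by rw [dist_eq_norm]; congr 1; rw [hndef]; abel
    have h7 : ‖n‖ ^ 2 ≤ ‖n - (z - y)‖ ^ 2 :=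
      pow_le_pow_left₀ (norm_nonneg n) h5 2
    have h8 := norm_sub_sq_real n (z - y)
    nlinarith [h7, h8]
  -- the unit normal
  set w : EuclideanSpace ℝ (Fin k) := ‖n‖⁻¹ • n with hwdef
  have hw1 : ‖w‖ = 1 := norm_smul_inv_norm hn0
  have hwP : w ∈ negPolar (contingentCone E y) := by
    intro u hu
    have h9 : ⟪n, u⟫ ≤ 0 := prox_mem_negPolar E hEne y hyE n hprox u hu
    rw [hwdef, real_inner_smul_left]
    exact mul_nonpos_of_nonneg_of_nonpos (inv_nonneg.2 (norm_nonneg n)) h9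
  -- slope upper bound via the norm function
  set ψ : ℝ → ℝ := fun z =>
    (2 * ⟪n, v⟫ + (z - t) * ‖v‖ ^ 2) / (‖n + (z - t) • v‖ + ‖n‖) with hψdef
  have hub : ∀ᶠ z in 𝓝[>] t, slope g t z ≤ ψ z := by
    filter_upwards [self_mem_nhdsWithin] with z hz
    have hs : (0:ℝ) < z - t := sub_pos.2 hz
    set A : EuclideanSpace ℝ (Fin k) := n + (z - t) • v with hAdef
    have hgz : g z ≤ ‖A‖ := by
      calc g z ≤ dist (x + z • v) y := Metric.infDist_le_dist_of_mem hyE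
        _ = ‖A‖ := by
            rw [dist_eq_norm]; congr 1
            rw [hAdef, hndef, sub_smul]; abel
    have hDpos : (0:ℝ) < ‖A‖ + ‖n‖ := by positivity
    have hsq : ‖A‖ ^ 2 = ‖n‖ ^ 2 + 2 * ((z - t) * ⟪n, v⟫) + (z - t) ^ 2 * ‖v‖ ^ 2 := by
      rw [hAdef, norm_add_sq_real, real_inner_smul_right, norm_smul, Real.norm_eq_abs,
        abs_of_pos hs, mul_pow]
    have heq : (‖A‖ - ‖n‖) / (z - t) = ψ z := by
      rw [hψdef]
      rw [div_eq_div_iff hs.ne' hDpos.ne']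
      linear_combination hsq
    have hstep : slope g t z ≤ (‖A‖ - ‖n‖) / (z - t) := by
      rw [slope_def_field]
      rw [div_le_div_iff_of_pos_right hs]
      rw [← hnn] at hgt ⊢
      linarith [hgz]
    calc slope g t z ≤ (‖A‖ - ‖n‖) / (z - t) := hstep
      _ = ψ z := heq
  -- ψ tends to ⟪n, v⟫ / ‖n‖
  have hψlim : Filter.Tendsto ψ (𝓝[>] t) (𝓝 (⟪n, v⟫ / ‖n‖)) := by
    have hnum : Filter.Tendsto (fun z : ℝ => 2 * ⟪n, v⟫ + (z - t) * ‖v‖ ^ 2)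
        (𝓝 t) (𝓝 (2 * ⟪n, v⟫)) := by
      have hc1 : Continuous (fun z : ℝ => 2 * ⟪n, v⟫ + (z - t) * ‖v‖ ^ 2) :=
        continuous_const.add ((continuous_id.sub continuous_const).mul continuous_const)
      have := hc1.tendsto t
      simpa using this
    have hden : Filter.Tendsto (fun z : ℝ => ‖n + (z - t) • v‖ + ‖n‖)
        (𝓝 t) (𝓝 (2 * ‖n‖)) := by
      have hc2 : Continuous (fun z : ℝ => ‖n + (z - t) • v‖ + ‖n‖) :=
        ((continuous_const.add
          ((continuous_id.sub continuous_const).smul continuous_const)).norm).add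
          continuous_const
      have := hc2.tendsto t
      simpa [two_mul] using this
    have hdiv := hnum.div hden (by positivity)
    have : (2 * ⟪n, v⟫) / (2 * ‖n‖) = ⟪n, v⟫ / ‖n‖ := by
      rw [mul_div_mul_left _ _ (by norm_num : (2:ℝ) ≠ 0)]
    rw [this] at hdiv
    exact hdiv.mono_left nhdsWithin_le_nhds
  -- conclude c/4 ≤ ⟪n, v⟫ / ‖n‖
  have hc4 : c / 4 ≤ ⟪n, v⟫ / ‖n‖ := by
    refine ge_of_tendsto hψlim ?_
    filter_upwards [hslope, hub] with z h1 h2 using le_trans h1 h2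
  have hvw : c / 4 ≤ ⟪v, w⟫ := by
    have : ⟪v, w⟫ = ⟪n, v⟫ / ‖n‖ := by
      rw [hwdef, real_inner_smul_right, real_inner_comm, div_eq_inv_mul]
    rw [this]
    exact hc4
  -- distance estimate
  have hyx : ‖y - x‖ < δ := by
    have e1 : ‖y - x‖ ≤ ‖n‖ + t * ‖v‖ := by
      have : y - x = -n + t • v := by rw [hndef]; abel
      rw [this]
      calc ‖-n + t • v‖ ≤ ‖-n‖ + ‖t • v‖ := norm_add_le _ _
        _ = ‖n‖ + t * ‖v‖ := by
            rw [norm_neg, norm_smul, Real.norm_eq_abs, abs_of_pos htpos]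
    have e2 : ‖n‖ ≤ t * ‖v‖ := by rw [hnn]; exact hgle t htpos.le
    have e3 : t * ‖v‖ < h1 * ‖v‖ := by
      exact mul_lt_mul_of_pos_right hth1 hv
    have e4 : h1 * ‖v‖ ≤ δ / 4 := by
      have : h1 ≤ δ / (4 * ‖v‖) := min_le_right _ _
      calc h1 * ‖v‖ ≤ (δ / (4 * ‖v‖)) * ‖v‖ := mul_le_mul_of_nonneg_right this (norm_nonneg v)
        _ = δ / 4 := by field_simp
    linarith
  exact ⟨y, hyE, hyx, w, hw1, hwP, hvw⟩

/-- For a closed set `E ⊂ ℝᵏ` and `x ∈ E`, the negative polar of the limiting normal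
cone is contained in the contingent cone: `N_E(x)⁻ ⊆ T_E(x)`, i.e. every vector `v`
with `⟪v, n⟫ ≤ 0` for all `n ∈ N_E(x)` belongs to `T_E(x)`. -/
theorem negPolar_limitingNormalCone_subset_contingentCone
    (k : ℕ) (E : Set (EuclideanSpace ℝ (Fin k))) (hE : IsClosed E)
    (hEne : E.Nonempty) (x : EuclideanSpace ℝ (Fin k)) (hx : x ∈ E) :
    negPolar (limitingNormalCone E x) ⊆ contingentCone E x := by
  intro v hv
  by_contra hvT
  simp only [contingentCone, Set.mem_setOf_eq] at hvT
  set g : ℝ → ℝ := fun s => Metric.infDist (x + s • v) E with hgdef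
  set c : ℝ := Filter.liminf (fun h : ℝ => g h / h) (𝓝[>] (0:ℝ)) with hcdef
  have hgle : ∀ s : ℝ, 0 ≤ s → g s ≤ s * ‖v‖ := by
    intro s hs
    calc g s ≤ dist (x + s • v) x := Metric.infDist_le_dist_of_mem hx
      _ = s * ‖v‖ := by
          rw [dist_eq_norm, add_sub_cancel_left, norm_smul, Real.norm_eq_abs, abs_of_nonneg hs]
  have hflb : ∀ᶠ h in 𝓝[>] (0:ℝ), (0:ℝ) ≤ g h / h := by
    filter_upwards [self_mem_nhdsWithin] with h hh
    exact div_nonneg Metric.infDist_nonneg (le_of_lt hh)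
  have hfub : ∀ᶠ h in 𝓝[>] (0:ℝ), g h / h ≤ ‖v‖ := by
    filter_upwards [self_mem_nhdsWithin] with h hh
    rw [div_le_iff₀ hh]
    calc g h ≤ h * ‖v‖ := hgle h hh.le
      _ = ‖v‖ * h := mul_comm _ _
  have hbddge : IsBoundedUnder (· ≥ ·) (𝓝[>] (0:ℝ)) (fun h : ℝ => g h / h) :=
    ⟨0, eventually_map.2 hflb⟩
  have hbddle : IsBoundedUnder (· ≤ ·) (𝓝[>] (0:ℝ)) (fun h : ℝ => g h / h) :=
    ⟨‖v‖, eventually_map.2 hfub⟩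
  have hc0 : 0 ≤ c := le_liminf_of_le hbddle.isCoboundedUnder_ge hflb
  have hcv : c ≤ ‖v‖ := liminf_le_of_frequently_le hfub.frequently hbddge
  have hcpos : 0 < c := lt_of_le_of_ne hc0 (fun h => hvT h.symm)
  -- eventual lower bound on g h / h
  have hev : ∀ᶠ h in 𝓝[>] (0:ℝ), c / 2 < g h / h :=
    eventually_lt_of_lt_liminf (by rw [← hcdef]; linarith) hbddge
  obtain ⟨h0, hh0, hsub⟩ := mem_nhdsGT_iff_exists_Ioc_subset.mp hev
  have hh0pos : (0:ℝ) < h0 := hh0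
  have hg : ∀ h : ℝ, 0 < h → h ≤ h0 → c / 2 * h ≤ Metric.infDist (x + h • v) E := by
    intro h hp hle
    have := hsub ⟨hp, hle⟩
    have h2 : c / 2 < g h / h := this
    exact le_of_lt ((lt_div_iff₀ hp).mp h2)
  -- sequence of unit normals
  have hseq : ∀ j : ℕ, ∃ y ∈ E, ‖y - x‖ < 1 / (j + 1) ∧
      ∃ w : EuclideanSpace ℝ (Fin k), ‖w‖ = 1 ∧
        w ∈ negPolar (contingentCone E y) ∧ c / 4 ≤ ⟪v, w⟫ :=
    fun j => exists_unit_normal E hE hEne x hx v c hcpos hcv h0 hh0pos hg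
      (1 / (j + 1)) (by positivity)
  choose y hyE hyx w hw1 hwP hwv using hseq
  have hwmem : ∀ j, w j ∈ Metric.sphere (0 : EuclideanSpace ℝ (Fin k)) 1 := by
    intro j
    rw [mem_sphere_zero_iff_norm]
    exact hw1 j
  obtain ⟨wl, hwlmem, φ, hφ, hconv⟩ :=
    (isCompact_sphere (0 : EuclideanSpace ℝ (Fin k)) 1).tendsto_subseq hwmem
  have hN : wl ∈ limitingNormalCone E x := by
    intro ε hε δ hδ
    obtain ⟨N1, hN1⟩ := Metric.tendsto_atTop.mp hconv ε hε
    obtain ⟨M, hM⟩ := exists_nat_gt (1 / δ)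
    set j := max N1 M with hjdef
    refine ⟨y (φ j), hyE _, ?_, w (φ j), hwP _, ?_⟩
    · have hφj : (M : ℝ) ≤ (φ j : ℝ) := by
        exact_mod_cast le_trans (le_max_right N1 M) (hφ.le_apply)
      have : (1 : ℝ) / ((φ j : ℝ) + 1) < δ := by
        rw [div_lt_iff₀ (by positivity)]
        have hδinv : 1 / δ < (φ j : ℝ) + 1 := by linarith
        calc (1:ℝ) = δ * (1 / δ) := by field_simp
          _ < δ * ((φ j : ℝ) + 1) := by
              exact mul_lt_mul_of_pos_left hδinv hδ
          _ = δ * ((φ j : ℝ) + 1) := rfl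
      calc ‖y (φ j) - x‖ < 1 / ((φ j : ℝ) + 1) := hyx (φ j)
        _ < δ := this
    · have := hN1 j (le_max_left N1 M)
      rw [← dist_eq_norm]
      exact this
  have hle0 : ⟪v, wl⟫ ≤ 0 := hv wl hN
  have hge : c / 4 ≤ ⟪v, wl⟫ := by
    have htend : Filter.Tendsto (fun j => ⟪v, w (φ j)⟫) atTop (𝓝 ⟪v, wl⟫) := by
      have hcont : Continuous (fun u : EuclideanSpace ℝ (Fin k) => ⟪v, u⟫) :=
        continuous_const.inner continuous_id
      exact (hcont.tendsto wl).comp hconv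
    exact ge_of_tendsto htend (Filter.Eventually.of_forall fun j => hwv (φ j))
  linarith
end
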